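/- Let (i,k,ℓ) ∈ X_diff and suppose either (a) μ₁ ≥ μ₂, or (b) μ₁ ≤ μ₂ and ℓ ≥ C₂. If h₁/μ₁ ≤ (max(ℓ+1, C₂)/C₂)·(h₂/μ₂), then D(i,k,ℓ) ≤ 0 (this holds for every i ≥ 0 with (i,k,ℓ) ∈ X_diff). -/

import Mathlib

/-!
With no class-0 jobs left the two classes are cleared independently, so `v(0, k, ℓ)` has a closed
form and `D(0, k, ℓ) = h₁/μ₁ − (ℓ+1) h₂ / (min(ℓ+1, C₂) μ₂)`; as
`(ℓ+1) / min(ℓ+1, C₂) = max(ℓ+1, C₂) / C₂`, this is the cost hypothesis.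

For `k + ℓ = C₁` induct on `i`. Knowing `D(i, k, ℓ) ≤ 0` and `D(i, k−1, ℓ+1) ≤ 0`, the Bellman
equations give `v(i+1, k, ℓ) ≤ c/d + v(i, k, ℓ) ≤ v(i+1, k−1, ℓ+1) − (c'/d' − c/d)`, where `c/d`
and `c'/d'` are the costs accrued before the next departure in the two states. The inequality
`c/d ≤ c'/d'` is where (a) or (b) and the cost hypothesis enter; both persist when `ℓ` grows,
which supplies the induction hypothesis at `(k−1, ℓ+1)`.
-/

/-- Overall service rate `d(k,ℓ) = k·μ₁ + min(ℓ,C₂)·μ₂`. -/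
noncomputable def dRate (C₂ : ℕ) (μ₁ μ₂ : ℝ) (k ℓ : ℕ) : ℝ :=
  (k : ℝ) * μ₁ + ((min ℓ C₂ : ℕ) : ℝ) * μ₂

/-- Membership of `(i,k,ℓ)` in the state space `X`. -/
def memX (C₁ : ℕ) (i k ℓ : ℕ) : Prop :=
  (i = 0 ∧ k + ℓ < C₁) ∨ k + ℓ = C₁

/-- `v` satisfies the optimality (Bellman) equations of the clearing system.
Terms whose coefficient `k·μ₁` or `min(ℓ,C₂)·μ₂` vanishes contribute `0`,
matching the convention that such summands are omitted. -/
def IsValue (C₁ C₂ : ℕ) (μ₁ μ₂ h₀ h₁ h₂ : ℝ) (v : ℕ → ℕ → ℕ → ℝ) : Prop :=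
  v 0 0 0 = 0 ∧
  (∀ k ℓ : ℕ, k + ℓ ≤ C₁ → ¬(k = 0 ∧ ℓ = 0) →
    v 0 k ℓ = ((k : ℝ) * h₁ + (ℓ : ℝ) * h₂) / dRate C₂ μ₁ μ₂ k ℓ
      + ((k : ℝ) * μ₁ / dRate C₂ μ₁ μ₂ k ℓ) * v 0 (k - 1) ℓ
      + (((min ℓ C₂ : ℕ) : ℝ) * μ₂ / dRate C₂ μ₁ μ₂ k ℓ) * v 0 k (ℓ - 1)) ∧
  (∀ i k ℓ : ℕ, k + ℓ = C₁ →
    v (i + 1) k ℓ =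
      (((i : ℝ) + 1) * h₀ + (k : ℝ) * h₁ + (ℓ : ℝ) * h₂) / dRate C₂ μ₁ μ₂ k ℓ
      + ((k : ℝ) * μ₁ / dRate C₂ μ₁ μ₂ k ℓ) *
          min (v i k ℓ) (v i (k - 1) (ℓ + 1))
      + (((min ℓ C₂ : ℕ) : ℝ) * μ₂ / dRate C₂ μ₁ μ₂ k ℓ) *
          min (v i (k + 1) (ℓ - 1)) (v i k ℓ))

/-- The difference `D(i,k,ℓ) = v(i,k,ℓ) − v(i,k−1,ℓ+1)`. -/
noncomputable def Dv (v : ℕ → ℕ → ℕ → ℝ) (i k ℓ : ℕ) : ℝ :=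
  v i k ℓ - v i (k - 1) (ℓ + 1)

/-- The value `v(0, k, ℓ)`. Without class-0 jobs the two classes are served independently: each
class-1 job costs `h₁ / μ₁`, and the class-2 queue spends mean time `1 / (min j C₂ · μ₂)` at
level `j`, accruing `j · h₂` per unit time. -/
noncomputable def clearingValue (C₂ : ℕ) (μ₁ μ₂ h₁ h₂ : ℝ) (k ℓ : ℕ) : ℝ :=
  k * h₁ / μ₁ + ∑ j ∈ Finset.range ℓ, ((j : ℝ) + 1) * h₂ / (((min (j + 1) C₂ : ℕ) : ℝ) * μ₂)

/-- The expected holding cost accrued in `(k, ℓ)` before the next departure; `a` is the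
holding-cost rate of the class-0 jobs. -/
noncomputable def stepCost (C₂ : ℕ) (μ₁ μ₂ a h₁ h₂ : ℝ) (k ℓ : ℕ) : ℝ :=
  (a + (k : ℝ) * h₁ + (ℓ : ℝ) * h₂) / dRate C₂ μ₁ μ₂ k ℓ

theorem Nat.cast_div_min_eq_max_div {a b : ℕ} (ha : 0 < a) (hb : 0 < b) :
    (a : ℝ) / (min a b : ℕ) = (max a b : ℕ) / b := by
  rw [div_eq_div_iff (by positivity) (by positivity)]
  exact_mod_cast ((Nat.mul_comm _ _).trans (min_mul_max a b)).symm

theorem div_add_mul_add_mul_le {c p q x y V : ℝ} (hp : 0 ≤ p) (hq : 0 ≤ q) (hpq : 0 < p + q)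
    (hx : x ≤ V) (hy : y ≤ V) :
    c / (p + q) + p / (p + q) * x + q / (p + q) * y ≤ c / (p + q) + V := by
  have hpx : p / (p + q) * x ≤ p / (p + q) * V := by gcongr
  have hqy : q / (p + q) * y ≤ q / (p + q) * V := by gcongr
  have hV : p / (p + q) * V + q / (p + q) * V = V := by field_simp
  linarith

theorem le_div_add_mul_add_mul {c p q x y V : ℝ} (hp : 0 ≤ p) (hq : 0 ≤ q) (hpq : 0 < p + q)
    (hx : 0 < p → V ≤ x) (hy : V ≤ y) :
    c / (p + q) + V ≤ c / (p + q) + p / (p + q) * x + q / (p + q) * y := by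
  have hpx : p / (p + q) * V ≤ p / (p + q) * x := by
    rcases hp.eq_or_lt with rfl | hp
    · simp
    · gcongr
      exact hx hp
  have hqy : q / (p + q) * V ≤ q / (p + q) * y := by gcongr
  have hV : p / (p + q) * V + q / (p + q) * V = V := by field_simp
  linarith

theorem holding_div_rate_le_of_saturated {a k ℓ C μ₁ μ₂ h₁ h₂ : ℝ} (ha : 0 ≤ a) (hk : 0 ≤ k)
    (hC : 0 < C) (hμ₁ : 0 < μ₁) (hμ₂ : 0 < μ₂) (hh₂ : 0 ≤ h₂)
    (hcost : h₁ / μ₁ ≤ (ℓ + 1) / C * (h₂ / μ₂)) :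
    (a + (k + 1) * h₁ + ℓ * h₂) / ((k + 1) * μ₁ + C * μ₂)
      ≤ (a + k * h₁ + (ℓ + 1) * h₂) / (k * μ₁ + C * μ₂) := by
  rw [div_mul_div_comm, div_le_div_iff₀ hμ₁ (by positivity)] at hcost
  rw [div_le_div_iff₀ (by positivity) (by positivity)]
  nlinarith [mul_nonneg ha hμ₁.le, mul_nonneg (mul_nonneg hk hμ₁.le) hh₂,
    mul_nonneg (mul_nonneg hC.le hμ₂.le) hh₂]

theorem holding_div_rate_le_of_unsaturated {a k ℓ μ₁ μ₂ h₁ h₂ : ℝ} (ha : 0 ≤ a) (hk : 0 ≤ k)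
    (hℓ : 0 ≤ ℓ) (hμ₁ : 0 < μ₁) (hμ₂ : 0 < μ₂) (hμ : μ₂ ≤ μ₁)
    (hcost : h₁ / μ₁ ≤ h₂ / μ₂) :
    (a + (k + 1) * h₁ + ℓ * h₂) / ((k + 1) * μ₁ + ℓ * μ₂)
      ≤ (a + k * h₁ + (ℓ + 1) * h₂) / (k * μ₁ + (ℓ + 1) * μ₂) := by
  rw [div_le_div_iff₀ hμ₁ hμ₂] at hcost
  rw [div_le_div_iff₀ (by positivity) (by positivity)]
  nlinarith [mul_nonneg ha (sub_nonneg.2 hμ), mul_nonneg (by positivity : 0 ≤ k + ℓ + 1)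
    (sub_nonneg.2 hcost)]

section

variable {C₁ C₂ : ℕ} {μ₁ μ₂ h₀ h₁ h₂ : ℝ} {v : ℕ → ℕ → ℕ → ℝ}

theorem dRate_pos (hC₂ : 1 ≤ C₂) (hμ₁ : 0 < μ₁) (hμ₂ : 0 < μ₂) {k ℓ : ℕ} (h : 0 < k + ℓ) :
    0 < dRate C₂ μ₁ μ₂ k ℓ := by
  unfold dRate
  rcases Nat.eq_zero_or_pos k with rfl | hk
  · have : 1 ≤ min ℓ C₂ := by omega
    have : (1 : ℝ) ≤ (min ℓ C₂ : ℕ) := by exact_mod_cast this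
    nlinarith
  · have : (0 : ℝ) < k := by exact_mod_cast hk
    positivity

theorem Dv_succ (i k ℓ : ℕ) : Dv v i (k + 1) ℓ = v i (k + 1) ℓ - v i k (ℓ + 1) := rfl

theorem clearingValue_add_one_left (k ℓ : ℕ) :
    clearingValue C₂ μ₁ μ₂ h₁ h₂ (k + 1) ℓ = clearingValue C₂ μ₁ μ₂ h₁ h₂ k ℓ + h₁ / μ₁ := by
  simp only [clearingValue]
  push_cast
  ring

theorem clearingValue_add_one_right (k ℓ : ℕ) :
    clearingValue C₂ μ₁ μ₂ h₁ h₂ k (ℓ + 1) = clearingValue C₂ μ₁ μ₂ h₁ h₂ k ℓ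
      + ((ℓ : ℝ) + 1) * h₂ / (((min (ℓ + 1) C₂ : ℕ) : ℝ) * μ₂) := by
  simp only [clearingValue, Finset.sum_range_succ]
  ring

theorem mul_clearingValue_sub_one_left (hμ₁ : 0 < μ₁) (k ℓ : ℕ) :
    (k : ℝ) * μ₁ * clearingValue C₂ μ₁ μ₂ h₁ h₂ (k - 1) ℓ
      = (k : ℝ) * μ₁ * clearingValue C₂ μ₁ μ₂ h₁ h₂ k ℓ - k * h₁ := by
  rcases k with _ | k
  · simp
  · rw [Nat.add_sub_cancel, clearingValue_add_one_left]
    field_simp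
    ring

theorem mul_clearingValue_sub_one_right (hC₂ : 1 ≤ C₂) (hμ₂ : 0 < μ₂) (k ℓ : ℕ) :
    ((min ℓ C₂ : ℕ) : ℝ) * μ₂ * clearingValue C₂ μ₁ μ₂ h₁ h₂ k (ℓ - 1)
      = ((min ℓ C₂ : ℕ) : ℝ) * μ₂ * clearingValue C₂ μ₁ μ₂ h₁ h₂ k ℓ - ℓ * h₂ := by
  rcases ℓ with _ | ℓ
  · simp
  · have : (1 : ℝ) ≤ (min (ℓ + 1) C₂ : ℕ) := by exact_mod_cast (by omega : 1 ≤ min (ℓ + 1) C₂)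
    rw [Nat.add_sub_cancel, clearingValue_add_one_right, Nat.cast_succ]
    field_simp
    ring

theorem clearingValue_bellman (hC₂ : 1 ≤ C₂) (hμ₁ : 0 < μ₁) (hμ₂ : 0 < μ₂) {k ℓ : ℕ}
    (h : 0 < k + ℓ) :
    clearingValue C₂ μ₁ μ₂ h₁ h₂ k ℓ
      = ((k : ℝ) * h₁ + (ℓ : ℝ) * h₂) / dRate C₂ μ₁ μ₂ k ℓ
        + ((k : ℝ) * μ₁ / dRate C₂ μ₁ μ₂ k ℓ) * clearingValue C₂ μ₁ μ₂ h₁ h₂ (k - 1) ℓ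
        + (((min ℓ C₂ : ℕ) : ℝ) * μ₂ / dRate C₂ μ₁ μ₂ k ℓ)
          * clearingValue C₂ μ₁ μ₂ h₁ h₂ k (ℓ - 1) := by
  have hd := dRate_pos hC₂ hμ₁ hμ₂ h
  rw [eq_comm, ← sub_eq_zero]
  field_simp
  unfold dRate
  linear_combination mul_clearingValue_sub_one_left (C₂ := C₂) (μ₂ := μ₂) (h₂ := h₂) hμ₁ k ℓ
    + mul_clearingValue_sub_one_right (μ₁ := μ₁) (h₁ := h₁) hC₂ hμ₂ k ℓ

theorem v_zero_eq_clearingValue (hC₂ : 1 ≤ C₂) (hμ₁ : 0 < μ₁) (hμ₂ : 0 < μ₂)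
    (hv : IsValue C₁ C₂ μ₁ μ₂ h₀ h₁ h₂ v) {k ℓ : ℕ} (h : k + ℓ ≤ C₁) :
    v 0 k ℓ = clearingValue C₂ μ₁ μ₂ h₁ h₂ k ℓ := by
  induction hn : k + ℓ using Nat.strong_induction_on generalizing k ℓ with
  | _ n ih =>
    rcases Nat.eq_zero_or_pos n with rfl | hpos
    · obtain ⟨rfl, rfl⟩ : k = 0 ∧ ℓ = 0 := by omega
      simp [hv.1, clearingValue]
    have hleft : (k : ℝ) * μ₁ / dRate C₂ μ₁ μ₂ k ℓ * v 0 (k - 1) ℓ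
        = (k : ℝ) * μ₁ / dRate C₂ μ₁ μ₂ k ℓ * clearingValue C₂ μ₁ μ₂ h₁ h₂ (k - 1) ℓ := by
      rcases k with _ | k
      · simp
      · rw [Nat.add_sub_cancel, ih (k + ℓ) (by omega) (by omega) rfl]
    have hright : ((min ℓ C₂ : ℕ) : ℝ) * μ₂ / dRate C₂ μ₁ μ₂ k ℓ * v 0 k (ℓ - 1)
        = ((min ℓ C₂ : ℕ) : ℝ) * μ₂ / dRate C₂ μ₁ μ₂ k ℓ
          * clearingValue C₂ μ₁ μ₂ h₁ h₂ k (ℓ - 1) := by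
      rcases ℓ with _ | ℓ
      · simp
      · rw [Nat.add_sub_cancel, ih (k + ℓ) (by omega) (by omega) rfl]
    rw [hv.2.1 k ℓ h (by omega), hleft, hright]
    exact (clearingValue_bellman hC₂ hμ₁ hμ₂ (by omega)).symm

theorem Dv_zero_nonpos (hC₂ : 1 ≤ C₂) (hμ₁ : 0 < μ₁) (hμ₂ : 0 < μ₂)
    (hv : IsValue C₁ C₂ μ₁ μ₂ h₀ h₁ h₂ v) {k ℓ : ℕ} (h : k + 1 + ℓ ≤ C₁)
    (hcost : h₁ / μ₁ ≤ ((max (ℓ + 1) C₂ : ℕ) : ℝ) / (C₂ : ℝ) * (h₂ / μ₂)) :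
    Dv v 0 (k + 1) ℓ ≤ 0 := by
  have hratio : ((ℓ : ℝ) + 1) * h₂ / (((min (ℓ + 1) C₂ : ℕ) : ℝ) * μ₂)
      = ((max (ℓ + 1) C₂ : ℕ) : ℝ) / (C₂ : ℝ) * (h₂ / μ₂) := by
    rw [← Nat.cast_div_min_eq_max_div (Nat.succ_pos ℓ) hC₂]
    push_cast [-Nat.cast_min]
    ring
  rw [Dv_succ, v_zero_eq_clearingValue hC₂ hμ₁ hμ₂ hv h,
    v_zero_eq_clearingValue hC₂ hμ₁ hμ₂ hv (by omega), clearingValue_add_one_left,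
    clearingValue_add_one_right]
  linarith

theorem Dv_nonpos_step (hC₂ : 1 ≤ C₂) (hμ₁ : 0 < μ₁) (hμ₂ : 0 < μ₂)
    (hv : IsValue C₁ C₂ μ₁ μ₂ h₀ h₁ h₂ v) {i k ℓ : ℕ} (hsum : k + 1 + ℓ = C₁)
    (hD : Dv v i (k + 1) ℓ ≤ 0) (hD' : 0 < k → Dv v i k (ℓ + 1) ≤ 0)
    (hstep : stepCost C₂ μ₁ μ₂ ((i + 1) * h₀) h₁ h₂ (k + 1) ℓ
      ≤ stepCost C₂ μ₁ μ₂ ((i + 1) * h₀) h₁ h₂ k (ℓ + 1)) :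
    Dv v (i + 1) (k + 1) ℓ ≤ 0 := by
  rw [Dv_succ, sub_nonpos] at hD ⊢
  have upper : v (i + 1) (k + 1) ℓ ≤ stepCost C₂ μ₁ μ₂ ((i + 1) * h₀) h₁ h₂ (k + 1) ℓ
      + v i (k + 1) ℓ := by
    rw [hv.2.2 i (k + 1) ℓ hsum, Nat.add_sub_cancel]
    exact div_add_mul_add_mul_le (by positivity) (by positivity)
      (dRate_pos hC₂ hμ₁ hμ₂ (by omega)) (min_le_left _ _) (min_le_right _ _)
  have lower : stepCost C₂ μ₁ μ₂ ((i + 1) * h₀) h₁ h₂ k (ℓ + 1) + v i (k + 1) ℓ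
      ≤ v (i + 1) k (ℓ + 1) := by
    rw [hv.2.2 i k (ℓ + 1) (by omega), Nat.add_sub_cancel]
    refine le_div_add_mul_add_mul (by positivity) (by positivity)
      (dRate_pos hC₂ hμ₁ hμ₂ (by omega)) (fun hk => le_min hD ?_) (le_min le_rfl hD)
    have hk : 0 < k := by exact_mod_cast (pos_of_mul_pos_left hk hμ₁.le)
    exact hD.trans (sub_nonpos.1 (hD' hk))
  linarith

theorem stepCost_add_one_left_le (hC₂ : 1 ≤ C₂) (hμ₁ : 0 < μ₁) (hμ₂ : 0 < μ₂) {a : ℝ}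
    (ha : 0 ≤ a) (hh₂ : 0 ≤ h₂) {k ℓ : ℕ} (hcase : μ₂ ≤ μ₁ ∨ (μ₁ ≤ μ₂ ∧ C₂ ≤ ℓ))
    (hcost : h₁ / μ₁ ≤ ((max (ℓ + 1) C₂ : ℕ) : ℝ) / (C₂ : ℝ) * (h₂ / μ₂)) :
    stepCost C₂ μ₁ μ₂ a h₁ h₂ (k + 1) ℓ ≤ stepCost C₂ μ₁ μ₂ a h₁ h₂ k (ℓ + 1) := by
  unfold stepCost dRate
  rcases le_or_gt C₂ ℓ with hℓ | hℓ
  · rw [max_eq_left (by omega)] at hcost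
    rw [min_eq_right hℓ, min_eq_right (by omega)]
    push_cast at hcost ⊢
    exact holding_div_rate_le_of_saturated ha k.cast_nonneg (by positivity) hμ₁ hμ₂ hh₂ hcost
  · have hμ : μ₂ ≤ μ₁ := hcase.resolve_right (by omega)
    rw [max_eq_right (by omega), div_self (by positivity), one_mul] at hcost
    rw [min_eq_left hℓ.le, min_eq_left (by omega)]
    push_cast
    exact holding_div_rate_le_of_unsaturated ha k.cast_nonneg ℓ.cast_nonneg hμ₁ hμ₂ hμ hcost

end

theorem stmt6_general
    (C₁ C₂ : ℕ) (hC₂pos : 1 ≤ C₂)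
    (μ₁ μ₂ h₀ h₁ h₂ : ℝ)
    (hμ₁ : 0 < μ₁) (hμ₂ : 0 < μ₂)
    (hh₀ : 0 < h₀) (hh₂ : 0 < h₂)
    (v : ℕ → ℕ → ℕ → ℝ) (hv : IsValue C₁ C₂ μ₁ μ₂ h₀ h₁ h₂ v)
    (i k ℓ : ℕ) (hx : memX C₁ i k ℓ) (hk : 1 ≤ k)
    (hcase : μ₂ ≤ μ₁ ∨ (μ₁ ≤ μ₂ ∧ C₂ ≤ ℓ))
    (hcost : h₁ / μ₁ ≤ ((max (ℓ + 1) C₂ : ℕ) : ℝ) / (C₂ : ℝ) * (h₂ / μ₂)) :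
    Dv v i k ℓ ≤ 0 := by
  obtain ⟨k, rfl⟩ := Nat.exists_eq_add_one.2 hk
  clear hk
  rcases hx with ⟨rfl, hlt⟩ | hsum
  · exact Dv_zero_nonpos hC₂pos hμ₁ hμ₂ hv hlt.le hcost
  induction i generalizing k ℓ with
  | zero => exact Dv_zero_nonpos hC₂pos hμ₁ hμ₂ hv hsum.le hcost
  | succ i ih =>
    refine Dv_nonpos_step hC₂pos hμ₁ hμ₂ hv hsum (ih ℓ hcase hcost k hsum) (fun hk => ?_)
      (stepCost_add_one_left_le hC₂pos hμ₁ hμ₂ (by positivity) hh₂.le hcase hcost)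
    obtain ⟨k, rfl⟩ := Nat.exists_eq_add_one.2 hk
    refine ih (ℓ + 1) (hcase.imp_right fun h => ⟨h.1, h.2.trans ℓ.le_succ⟩)
      (hcost.trans ?_) k (by omega)
    gcongr
    omega

theorem stmt6
    (C₁ C₂ : ℕ) (hC₂pos : 1 ≤ C₂) (hC : C₂ < C₁)
    (μ₁ μ₂ h₀ h₁ h₂ : ℝ)
    (hμ₁ : 0 < μ₁) (hμ₂ : 0 < μ₂)
    (hh₀ : 0 < h₀) (hh₁ : 0 < h₁) (hh₂ : 0 < h₂)
    (v : ℕ → ℕ → ℕ → ℝ) (hv : IsValue C₁ C₂ μ₁ μ₂ h₀ h₁ h₂ v)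
    (i k ℓ : ℕ) (hx : memX C₁ i k ℓ) (hk : 1 ≤ k)
    (hcase : μ₂ ≤ μ₁ ∨ (μ₁ ≤ μ₂ ∧ C₂ ≤ ℓ))
    (hcost : h₁ / μ₁ ≤ ((max (ℓ + 1) C₂ : ℕ) : ℝ) / (C₂ : ℝ) * (h₂ / μ₂)) :
    Dv v i k ℓ ≤ 0 :=
  stmt6_general C₁ C₂ hC₂pos μ₁ μ₂ h₀ h₁ h₂ hμ₁ hμ₂ hh₀ hh₂ v hv i k ℓ hx hk hcase hcost
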